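/- For every x ∈ ℂ^n, the reconstruction error of F-pooling equals the energy of the high-frequency component: ‖P̄ P x − x‖² = ‖x_h‖², where ‖·‖ is the standard Euclidean norm on ℂ^n. -/

import Mathlib

open Matrix Complex Finset

/-- The (unnormalized) DFT matrix: entries exp(-2πi·jk/n). -/
noncomputable def dftMatrix (n : ℕ) : Matrix (Fin n) (Fin n) ℂ :=
  Matrix.of fun j k =>
    Complex.exp (-2 * (Real.pi : ℂ) * Complex.I * ((j.val : ℂ) * (k.val : ℂ)) / (n : ℂ))

/-- Selection matrix keeping the first μ and last (m−μ) coordinate rows. -/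
def selD (n m μ : ℕ) : Matrix (Fin m) (Fin n) ℂ :=
  Matrix.of fun j k =>
    if (j.val < μ ∧ k.val = j.val) ∨ (μ ≤ j.val ∧ k.val = j.val + n - m) then 1 else 0

/-- Diagonal projection keeping the first μ and last μ coordinates. -/
def selL (n μ : ℕ) : Matrix (Fin n) (Fin n) ℂ :=
  Matrix.diagonal fun k => if k.val < μ ∨ n - μ ≤ k.val then 1 else 0

/-- F-pooling matrix P = (1/n) F_m* D_μ F_n. -/
noncomputable def fpool (n m μ : ℕ) : Matrix (Fin m) (Fin n) ℂ :=
  (1 / (n : ℂ)) • ((dftMatrix m)ᴴ * selD n m μ * dftMatrix n)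

/-- Inverse F-pooling matrix P̄ = (1/m) F_n* U_μ F_m with U_μ = D_μᵀ. -/
noncomputable def fpoolInv (n m μ : ℕ) : Matrix (Fin n) (Fin m) ℂ :=
  (1 / (m : ℂ)) • ((dftMatrix n)ᴴ * (selD n m μ)ᵀ * dftMatrix m)

/-- Low-frequency component x_l = (1/n) F_n* L_μ F_n x. -/
noncomputable def lowFreq (n μ : ℕ) (x : Fin n → ℂ) : Fin n → ℂ :=
  (1 / (n : ℂ)) • ((dftMatrix n)ᴴ *ᵥ (selL n μ *ᵥ (dftMatrix n *ᵥ x)))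

/-- Circular shift by t pixels: (S_t x)_k = x_{(k−t) mod n}. -/
def shift {n : ℕ} (t : ℤ) (x : Fin n → ℂ) : Fin n → ℂ :=
  fun k => x ⟨(((k.val : ℤ) - t) % (n : ℤ)).toNat, by
    have hn : (0 : ℤ) < (n : ℤ) := by exact_mod_cast k.pos
    have h2 : ((k.val : ℤ) - t) % (n : ℤ) < (n : ℤ) := Int.emod_lt_of_pos _ hn
    have h1 : 0 ≤ ((k.val : ℤ) - t) % (n : ℤ) := Int.emod_nonneg _ (by omega)
    omega⟩

lemma dft_mul_conjTranspose (m : ℕ) (hm : 0 < m) :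
    dftMatrix m * (dftMatrix m)ᴴ = (m : ℂ) • 1 := by
  ext j k
  simp only [Matrix.mul_apply, Matrix.conjTranspose_apply, dftMatrix, Matrix.of_apply,
    Matrix.smul_apply, Matrix.one_apply, RCLike.star_def, ← Complex.exp_conj]
  have key : ∀ l : Fin m,
      Complex.exp (-2 * (Real.pi : ℂ) * Complex.I * ((j.val : ℂ) * (l.val : ℂ)) / (m : ℂ)) *
      Complex.exp ((starRingEnd ℂ) (-2 * (Real.pi : ℂ) * Complex.I * ((k.val : ℂ) * (l.val : ℂ)) / (m : ℂ))) =
      (Complex.exp (-2 * (Real.pi : ℂ) * Complex.I * ((j.val : ℂ) - (k.val : ℂ)) / (m : ℂ))) ^ (l.val) := by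
    intro l
    rw [← Complex.exp_nat_mul, ← Complex.exp_add]
    congr 1
    simp only [map_div₀, _root_.map_mul, map_neg, map_ofNat, Complex.conj_I, Complex.conj_ofReal,
      map_natCast]
    field_simp
    ring
  rw [Finset.sum_congr rfl (fun l _ => key l)]
  set z : ℂ := Complex.exp (-2 * (Real.pi : ℂ) * Complex.I * ((j.val : ℂ) - (k.val : ℂ)) / (m : ℂ)) with hz
  have hsum : ∑ l : Fin m, z ^ (l.val) = ∑ i ∈ Finset.range m, z ^ i :=
    Fin.sum_univ_eq_sum_range _ _
  rw [hsum]
  by_cases hjk : j = k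
  · subst hjk
    have : z = 1 := by
      rw [hz]; simp
    simp [this]
  · have hne : ((j.val : ℂ) - (k.val : ℂ)) ≠ 0 := by
      have : (j.val : ℂ) ≠ (k.val : ℂ) := by
        exact_mod_cast fun h => hjk (Fin.ext (by exact_mod_cast h))
      intro h; apply this; linear_combination h
    have hm0 : (m : ℂ) ≠ 0 := Nat.cast_ne_zero.mpr hm.ne'
    have h2pi : (2:ℂ) * (Real.pi : ℂ) * Complex.I ≠ 0 := by
      simp [Complex.ofReal_ne_zero.mpr Real.pi_ne_zero, Complex.I_ne_zero]
    have hzm : z ^ m = 1 := by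
      rw [hz, ← Complex.exp_nat_mul, Complex.exp_eq_one_iff]
      refine ⟨(k.val : ℤ) - (j.val : ℤ), ?_⟩
      push_cast
      field_simp
      ring
    have hz1 : z ≠ 1 := by
      rw [hz, Ne, Complex.exp_eq_one_iff]
      rintro ⟨t, ht⟩
      field_simp at ht
      have key2 : ((k.val:ℂ) - (j.val:ℂ)) * (2 * (Real.pi:ℂ) * Complex.I) =
          ((t:ℂ) * (m:ℂ)) * (2 * (Real.pi:ℂ) * Complex.I) := by linear_combination (2 * (Real.pi:ℂ) * Complex.I) * ht
      have hC : ((k.val:ℂ) - (j.val:ℂ)) = (t:ℂ) * (m:ℂ) := mul_right_cancel₀ h2pi key2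
      have heq : (k.val : ℤ) - (j.val : ℤ) = t * (m : ℤ) := by exact_mod_cast hC
      have hkm : (k.val : ℤ) < m := by exact_mod_cast k.isLt
      have hjm : (j.val : ℤ) < m := by exact_mod_cast j.isLt
      have hjk' : (j.val : ℤ) ≠ (k.val : ℤ) := by
        intro h; exact hjk (Fin.ext (by exact_mod_cast h))
      rcases lt_trichotomy t 0 with h | h | h
      · have hle : t * (m : ℤ) ≤ -(m : ℤ) := by nlinarith
        rw [← heq] at hle; omega
      · rw [h] at heq; simp at heq; omega
      · have hge : (m : ℤ) ≤ t * (m : ℤ) := by nlinarith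
        rw [← heq] at hge; omega
    rw [geom_sum_eq hz1, hzm]
    simp [hjk]

lemma selDT_mul_selD (n m μ : ℕ) (hmμ : m = 2 * μ) (hmn : m < n) :
    (selD n m μ)ᵀ * selD n m μ = selL n μ := by
  ext k k'
  simp only [Matrix.mul_apply, Matrix.transpose_apply, selD, selL, Matrix.of_apply,
    Matrix.diagonal_apply]
  have hred : ∀ j : Fin m,
      (if (j.val < μ ∧ k.val = j.val) ∨ (μ ≤ j.val ∧ k.val = j.val + n - m) then (1:ℂ) else 0) *
      (if (j.val < μ ∧ k'.val = j.val) ∨ (μ ≤ j.val ∧ k'.val = j.val + n - m) then (1:ℂ) else 0) =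
      (if (((j.val < μ ∧ k.val = j.val) ∨ (μ ≤ j.val ∧ k.val = j.val + n - m)) ∧
          ((j.val < μ ∧ k'.val = j.val) ∨ (μ ≤ j.val ∧ k'.val = j.val + n - m))) then (1:ℂ) else 0) := by
    intro j
    by_cases h1 : (j.val < μ ∧ k.val = j.val) ∨ (μ ≤ j.val ∧ k.val = j.val + n - m) <;>
      by_cases h2 : (j.val < μ ∧ k'.val = j.val) ∨ (μ ≤ j.val ∧ k'.val = j.val + n - m) <;>
      simp [h1, h2]
  rw [Finset.sum_congr rfl (fun j _ => hred j)]
  have hkn := k.isLt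
  have hk'n := k'.isLt
  by_cases hk : k.val < μ
  · rw [Finset.sum_eq_single (⟨k.val, by omega⟩ : Fin m)]
    · simp only [Fin.val_mk, and_true, true_and]
      split_ifs with h1 h2 h3 h4 h5 h6 <;>
        first
          | rfl
          | (exfalso; simp only [Fin.ext_iff, and_true, true_and] at *; omega)
    · intro j _ hj
      have hj' : j.val ≠ k.val := fun h => hj (Fin.ext h)
      rw [if_neg]
      rintro ⟨h1 | h1, -⟩ <;> omega
    · intro h; exact absurd (Finset.mem_univ _) h
  · by_cases hk2 : n - μ ≤ k.val
    · rw [Finset.sum_eq_single (⟨k.val + m - n, by omega⟩ : Fin m)]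
      · simp only [Fin.val_mk, and_true, true_and]
        split_ifs with h1 h2 h3 h4 h5 h6 <;>
          first
            | rfl
            | (exfalso; simp only [Fin.ext_iff, and_true, true_and] at *; omega)
      · intro j _ hj
        have hj' : j.val ≠ k.val + m - n := fun h => hj (Fin.ext h)
        rw [if_neg]
        rintro ⟨h1 | h1, -⟩ <;> omega
      · intro h; exact absurd (Finset.mem_univ _) h
    · rw [Finset.sum_eq_zero (fun j _ => by
        rw [if_neg]
        rintro ⟨h1 | h1, -⟩ <;> omega)]
      by_cases hkk : k = k'
      · subst hkk
        rw [if_pos rfl, if_neg (by omega)]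
      · rw [if_neg hkk]

lemma comp_eq (n m μ : ℕ) (hm : 0 < m) (hmμ : m = 2 * μ) (hmn : m < n) :
    fpoolInv n m μ * fpool n m μ
      = (1 / (n : ℂ)) • ((dftMatrix n)ᴴ * selL n μ * dftMatrix n) := by
  have hm0 : (m : ℂ) ≠ 0 := Nat.cast_ne_zero.mpr hm.ne'
  unfold fpoolInv fpool
  rw [Matrix.smul_mul, Matrix.mul_smul, smul_smul]
  simp only [Matrix.mul_assoc]
  have h1 : dftMatrix m * ((dftMatrix m)ᴴ * (selD n m μ * dftMatrix n)) =
      (m : ℂ) • (selD n m μ * dftMatrix n) := by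
    rw [← Matrix.mul_assoc, dft_mul_conjTranspose m hm, Matrix.smul_mul, Matrix.one_mul]
  rw [h1, Matrix.mul_smul, Matrix.mul_smul, smul_smul,
    ← Matrix.mul_assoc (selD n m μ)ᵀ, selDT_mul_selD n m μ hmμ hmn]
  congr 1
  have hn0 : (n : ℂ) ≠ 0 := Nat.cast_ne_zero.mpr (by omega)
  field_simp

lemma comp_vec (n m μ : ℕ) (hm : 0 < m) (hmμ : m = 2 * μ) (hmn : m < n) (x : Fin n → ℂ) :
    fpoolInv n m μ *ᵥ (fpool n m μ *ᵥ x) = lowFreq n μ x := by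
  rw [Matrix.mulVec_mulVec, comp_eq n m μ hm hmμ hmn, lowFreq,
    Matrix.smul_mulVec, Matrix.mul_assoc, ← Matrix.mulVec_mulVec,
    ← Matrix.mulVec_mulVec]

/-- ‖P̄Px − x‖² = ‖x_h‖². -/
theorem stmt_7 (n m μ : ℕ) (hn : 0 < n) (hm : 0 < m) (hmμ : m = 2 * μ) (hmn : m < n)
    (x : Fin n → ℂ) :
    ∑ k : Fin n, ‖(fpoolInv n m μ *ᵥ (fpool n m μ *ᵥ x)) k - x k‖ ^ 2 =
      ∑ k : Fin n, ‖x k - lowFreq n μ x k‖ ^ 2 := by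
  refine Finset.sum_congr rfl fun k _ => ?_
  rw [comp_vec n m μ hm hmμ hmn x, norm_sub_rev]
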